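/- Descent identity for ω³₂: with ω³₂ = Tr((dc)² c) and ω⁴₁ = -(i/2) Tr(dc·c³), one has s ω³₂ + d ω⁴₁ = 0. -/
import Mathlib


/-- Descent identity for `ω³₂`: with `ω³₂ = Tr ((dc)² c)` and
`ω⁴₁ = -(i/2) Tr (dc · c³)`, one has `s ω³₂ + d ω⁴₁ = 0`.
Here `s, d` are anticommuting nilpotent odd derivations (parity encoded by
the involution `ε`), `s c = -i c²`, and `Tr` is the graded-cyclic trace. -/
theorem descent_omega32 {A B : Type*} [Ring A] [Algebra ℂ A]
    [AddCommGroup B] [Module ℂ B]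
    (ε : A →+* A) (hεinv : ∀ x, ε (ε x) = x)
    (s d : A →ₗ[ℂ] A)
    (hsLeib : ∀ x y, s (x * y) = s x * y + ε x * s y)
    (hdLeib : ∀ x y, d (x * y) = d x * y + ε x * d y)
    (hs2 : ∀ x, s (s x) = 0)
    (hd2 : ∀ x, d (d x) = 0)
    (hsd : ∀ x, s (d x) + d (s x) = 0)
    (hεs : ∀ x, ε (s x) = - s (ε x))
    (hεd : ∀ x, ε (d x) = - d (ε x))
    (c a : A) (hεc : ε c = - c) (hεa : ε a = - a)
    (hsc : s c = - (Complex.I • (c * c)))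
    (hsa : s a = d c - Complex.I • (c * a + a * c))
    (Tr : A →ₗ[ℂ] B)
    (hcyc_odd : ∀ x y, ε x = -x → ε y = -y → Tr (x * y) = - Tr (y * x))
    (hcyc_even : ∀ x y, ε x = x → Tr (x * y) = Tr (y * x))
    (sB dB : B →ₗ[ℂ] B)
    (hsB : ∀ x, sB (Tr x) = Tr (s x))
    (hdB : ∀ x, dB (Tr x) = Tr (d x)) :
    sB (Tr (d c * d c * c)) +
      dB ((-(Complex.I / 2)) • Tr (d c * c ^ 3)) = 0 := by
  have hεu : ε (d c) = d c := by rw [hεd, hεc, map_neg, neg_neg]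
  have hsu : s (d c) = Complex.I • (d c * c) - Complex.I • (c * d c) := by
    have h := hsd c
    have h2 : s (d c) = - d (s c) := by linear_combination (norm := abel) h
    rw [h2, hsc, map_neg, map_smul, hdLeib, hεc, neg_mul, smul_add, smul_neg]
    abel
  have hεuc : ε (d c * c) = -(d c * c) := by rw [map_mul, hεu, hεc, mul_neg]
  have hεuuc : ε (d c * (d c * c)) = -(d c * (d c * c)) := by
    rw [map_mul, hεu, hεuc, mul_neg]
  -- trace identities
  have T0 : Tr (d c * (c * (d c * c))) = 0 := by
    have := hcyc_odd (d c * c) (d c * c) hεuc hεuc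
    rw [mul_assoc] at this
    have h0 : (2 : ℂ) • Tr (d c * (c * (d c * c))) = 0 := by
      rw [two_smul]
      linear_combination (norm := abel) this
    have := smul_eq_zero.mp h0
    simpa using this
  have T1 : Tr (c * (d c * (d c * c))) = - Tr (d c * (d c * (c * c))) := by
    have := hcyc_odd c (d c * (d c * c)) hεc hεuuc
    rw [this]
    congr 1
    rw [mul_assoc, mul_assoc]
  have T2 : Tr (d c * (c * (c * d c))) = Tr (d c * (d c * (c * c))) := by
    have h1 := hcyc_even (d c) (c * (c * d c)) hεu
    have h2 : ε (c * c) = c * c := by rw [map_mul, hεc, neg_mul_neg]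
    have h3 := hcyc_even (c * c) (d c * d c) h2
    rw [h1]
    calc Tr (c * (c * d c) * d c) = Tr (c * c * (d c * d c)) := by
            rw [mul_assoc, mul_assoc, mul_assoc]
      _ = Tr (d c * d c * (c * c)) := h3
      _ = Tr (d c * (d c * (c * c))) := by rw [mul_assoc]
  -- expand s (dc * dc * c)
  have hS : s (d c * d c * c) = -(Complex.I • (c * (d c * (d c * c)))) := by
    rw [hsLeib, hsLeib, map_mul, hεu, hsc, hsu]
    simp only [sub_mul, add_mul, mul_add, smul_mul_assoc, mul_sub, mul_smul_comm,
      mul_neg, neg_mul, smul_neg, mul_assoc]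
    abel
  -- expand d (dc * c^3)
  have hD : d (d c * c ^ 3) = d c * (d c * (c * c)) - d c * (c * (d c * c))
      + d c * (c * (c * d c)) := by
    have hdu : d (d c) = 0 := hd2 c
    have hc3 : (c : A) ^ 3 = c * (c * c) := by rw [pow_succ, pow_succ, pow_one, mul_assoc]
    rw [hc3, hdLeib, hdLeib, hdLeib, hdu, hεc, hεu]
    simp only [zero_mul, neg_mul, mul_add, mul_neg, mul_assoc]
    abel
  rw [hsB, map_smul, hdB, hS, hD, map_neg, map_smul, map_add, map_sub, T0, T1, T2]
  module
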